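/- arXiv:1810.12610 — 9 statements merged into one kernel-verified Lean document; each statement's English description precedes it below -/
import Mathlib

section
/- Let h > 0 be a real number, ω ≠ 0 a real number, and κ a nonzero complex number (representing the controller value K(jω)). Write K_R = Re(1/κ) and K_J = Im(1/κ). Then |κ| < |−ω² + (1 + j h ω)·κ| if and only if (h − ω·K_J)² > K_R·(2 − ω²·K_R), where j denotes the imaginary unit. (Equivalently: the complementary sensitivity T(jω) = κ/(−ω² + (1+jhω)κ) satisfies |T(jω)| < 1 exactly under this condition.) -/
/-! Dividing by `κ`, the inequality becomes `1 < |z|²` for `z = 1 + jhω − ω²/κ`, and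
`|z|² − 1 = ω² ((h − ω K_J)² − K_R (2 − ω² K_R))`; since `ω² > 0` the two sides have the same
sign. -/

theorem norm_lt_norm_iff_one_lt_normSq_div {κ w : ℂ} (hκ : κ ≠ 0) :
    ‖κ‖ < ‖w‖ ↔ 1 < Complex.normSq (w / κ) := by
  rw [← one_lt_div (norm_pos_iff.2 hκ), ← norm_div, ← one_lt_sq_iff₀ (norm_nonneg _),
    Complex.sq_norm]

theorem headway_denominator_div (h ω : ℝ) {κ : ℂ} (hκ : κ ≠ 0) :
    (-(ω : ℂ) ^ 2 + (1 + Complex.I * h * ω) * κ) / κ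
      = 1 + Complex.I * h * ω - ω ^ 2 * (1 / κ) := by
  field_simp
  ring

theorem normSq_headway_sub_one (h ω : ℝ) (c : ℂ) :
    Complex.normSq (1 + Complex.I * h * ω - ω ^ 2 * c) - 1
      = ω ^ 2 * ((h - ω * c.im) ^ 2 - c.re * (2 - ω ^ 2 * c.re)) := by
  simp only [Complex.normSq_apply, Complex.add_re, Complex.add_im, Complex.sub_re,
    Complex.sub_im, Complex.mul_re, Complex.mul_im, Complex.one_re, Complex.one_im,
    Complex.I_re, Complex.I_im, Complex.ofReal_re, Complex.ofReal_im, ← Complex.ofReal_pow]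
  ring

theorem string_stability_headway_pointwise_criterion_general
    (h ω : ℝ) (hω : ω ≠ 0) (κ : ℂ) (hκ : κ ≠ 0) :
    ‖κ‖ < ‖-(ω : ℂ) ^ 2 + (1 + Complex.I * (h : ℂ) * (ω : ℂ)) * κ‖ ↔
      (1 / κ).re * (2 - ω ^ 2 * (1 / κ).re) < (h - ω * (1 / κ).im) ^ 2 := by
  rw [norm_lt_norm_iff_one_lt_normSq_div hκ, headway_denominator_div h ω hκ, ← sub_pos,
    normSq_headway_sub_one, mul_pos_iff_of_pos_left (by positivity), sub_pos]

/-- Pointwise characterization underlying Proposition 2: for `h > 0`, `ω ≠ 0` and a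
nonzero controller value `κ = K(jω)`, with `K_R = Re(1/κ)` and `K_J = Im(1/κ)`,
one has `|κ| < |−ω² + (1 + j h ω) κ|` iff `(h − ω K_J)² > K_R (2 − ω² K_R)`. -/
theorem string_stability_headway_pointwise_criterion
    (h ω : ℝ) (hh : 0 < h) (hω : ω ≠ 0) (κ : ℂ) (hκ : κ ≠ 0) :
    ‖κ‖ < ‖-(ω : ℂ) ^ 2 + (1 + Complex.I * (h : ℂ) * (ω : ℂ)) * κ‖ ↔
      (1 / κ).re * (2 - ω ^ 2 * (1 / κ).re) < (h - ω * (1 / κ).im) ^ 2 :=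
  string_stability_headway_pointwise_criterion_general h ω hω κ hκ
end

section
/- Let a, b > 0 and h > 0 be real numbers with h² ≥ 2/a, and let K(s) = b·s + a, D(s) = s² + (1 + h·s)·K(s), T(s) = K(s)/D(s). Then: (i) D(jω) ≠ 0 for every real ω; (ii) |T(jω)| < 1 for every real ω ≠ 0; and (iii) |T(j·0)| = 1. Here j denotes the imaginary unit. -/
/-!
On the imaginary axis `|D(jω)|² - |K(jω)|² = ω²(a²h² - 2a) + (1 + hb)²ω⁴`, and `h² ≥ 2/a` makes the
first term nonnegative. Hence `|D(jω)| ≥ |K(jω)| ≥ a > 0`, with strict inequality for `ω ≠ 0`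
because `1 + hb > 0`; at `ω = 0` both equal `a`.
-/

open Complex

section PDLoop

variable (a b h ω : ℝ)

lemma normSq_pd_controller_imag_axis :
    normSq ((b : ℂ) * (I * ω) + a) = a ^ 2 + (b * ω) ^ 2 := by
  rw [show (b : ℂ) * (I * ω) + a = a + (b * ω : ℝ) * I by push_cast; ring, normSq_add_mul_I]

lemma normSq_pd_denominator_sub_normSq_controller :
    normSq ((I * ω) ^ 2 + (1 + h * (I * ω)) * ((b : ℂ) * (I * ω) + a))
      - normSq ((b : ℂ) * (I * ω) + a)
      = ω ^ 2 * (a ^ 2 * h ^ 2 - 2 * a) + ((1 + h * b) * ω ^ 2) ^ 2 := by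
  have hD : (I * ω) ^ 2 + (1 + h * (I * ω)) * ((b : ℂ) * (I * ω) + a)
      = (a - (1 + h * b) * ω ^ 2 : ℝ) + (ω * (b + a * h) : ℝ) * I := by
    push_cast
    linear_combination ((1 + h * b) * (ω : ℂ) ^ 2) * I_sq
  rw [hD, normSq_add_mul_I, normSq_pd_controller_imag_axis]
  ring

variable {a b h ω}

lemma normSq_pd_controller_le_normSq_denominator (hgap : 2 * a ≤ a ^ 2 * h ^ 2) :
    normSq ((b : ℂ) * (I * ω) + a)
      ≤ normSq ((I * ω) ^ 2 + (1 + h * (I * ω)) * ((b : ℂ) * (I * ω) + a)) := by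
  have hdiff := normSq_pd_denominator_sub_normSq_controller a b h ω
  nlinarith [sq_nonneg ω, sq_nonneg ((1 + h * b) * ω ^ 2)]

lemma normSq_pd_controller_lt_normSq_denominator (hgap : 2 * a ≤ a ^ 2 * h ^ 2)
    (hhb : 1 + h * b ≠ 0) (hω : ω ≠ 0) :
    normSq ((b : ℂ) * (I * ω) + a)
      < normSq ((I * ω) ^ 2 + (1 + h * (I * ω)) * ((b : ℂ) * (I * ω) + a)) := by
  have hdiff := normSq_pd_denominator_sub_normSq_controller a b h ω
  have hquartic : 0 < ((1 + h * b) * ω ^ 2) ^ 2 := by positivity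
  nlinarith [sq_nonneg ω]

end PDLoop

/-- For the PD controller `K(s) = b s + a` with `a, b > 0` and time headway `h > 0`
satisfying `h² ≥ 2/a`, with `D(s) = s² + (1 + h s) K(s)` and `T(s) = K(s)/D(s)`:
(i) `D(jω) ≠ 0` for all real `ω`; (ii) `|T(jω)| < 1` for all real `ω ≠ 0`;
(iii) `|T(j·0)| = 1`. -/
theorem pd_headway_sensitivity_strictly_contractive
    (a b h : ℝ) (ha : 0 < a) (hb : 0 < b) (hh : 0 < h) (hha : 2 / a ≤ h ^ 2)
    (K D T : ℂ → ℂ)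
    (hK : ∀ s : ℂ, K s = (b : ℂ) * s + (a : ℂ))
    (hD : ∀ s : ℂ, D s = s ^ 2 + (1 + (h : ℂ) * s) * K s)
    (hT : ∀ s : ℂ, T s = K s / D s) :
    (∀ ω : ℝ, D (Complex.I * (ω : ℂ)) ≠ 0) ∧
    (∀ ω : ℝ, ω ≠ 0 → ‖T (Complex.I * (ω : ℂ))‖ < 1) ∧
    ‖T (Complex.I * ((0 : ℝ) : ℂ))‖ = 1 := by
  have hgap : 2 * a ≤ a ^ 2 * h ^ 2 := by
    have hha' := (div_le_iff₀ ha).mp hha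
    nlinarith
  have hKpos (ω : ℝ) : 0 < normSq (K (I * ω)) := by
    rw [hK, normSq_pd_controller_imag_axis]
    positivity
  have hKD (ω : ℝ) : normSq (K (I * ω)) ≤ normSq (D (I * ω)) := by
    rw [hD, hK]
    exact normSq_pd_controller_le_normSq_denominator hgap
  have hDne (ω : ℝ) : D (I * ω) ≠ 0 :=
    normSq_pos.mp ((hKpos ω).trans_le (hKD ω))
  refine ⟨hDne, fun ω hω => ?_, ?_⟩
  · have hlt : ‖K (I * ω)‖ ^ 2 < ‖D (I * ω)‖ ^ 2 := by
      rw [← normSq_eq_norm_sq, ← normSq_eq_norm_sq, hD, hK]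
      exact normSq_pd_controller_lt_normSq_denominator hgap (by positivity) hω
    rw [hT, norm_div, div_lt_one (norm_pos_iff.mpr (hDne ω))]
    exact (sq_lt_sq₀ (norm_nonneg _) (norm_nonneg _)).mp hlt
  · simp [hT, hD, hK, ha.ne']
end

section
/- Let a, b > 0 and h > 0 be real numbers with h² ≥ 2/a, and let K(s) = b·s + a, D(s) = s² + (1 + h·s)·K(s), T(s) = K(s)/D(s). Then the supremum over all real ω of |T(jω)| equals 1, and it is attained at ω = 0. Here j denotes the imaginary unit. -/
/-!
On the imaginary axis, `|D(jω)|² - |K(jω)|² = ω² ((1 + h b)² ω² + a (a h² - 2))`, which is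
nonnegative as soon as `a h² ≥ 2`; hence `|T(jω)| ≤ 1`, with equality at `ω = 0`, where
`T(0) = K(0)/D(0) = a/a`.
-/

open Complex

theorem normSq_pd_denominator_sub_numerator (a b h ω : ℝ) :
    normSq ((I * ω) ^ 2 + (1 + h * (I * ω)) * (b * (I * ω) + a)) - normSq (b * (I * ω) + a) =
      ω ^ 2 * ((1 + h * b) ^ 2 * ω ^ 2 + a * (a * h ^ 2 - 2)) := by
  simp only [normSq_apply, pow_two, add_re, add_im, mul_re, mul_im, ofReal_re, ofReal_im,
    I_re, I_im, one_re, one_im]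
  ring

theorem normSq_pd_numerator_le_denominator {a : ℝ} (b h ω : ℝ) (hah : 2 ≤ a * h ^ 2) :
    normSq (b * (I * ω) + a) ≤ normSq ((I * ω) ^ 2 + (1 + h * (I * ω)) * (b * (I * ω) + a)) := by
  have ha : 0 ≤ a := by nlinarith [sq_nonneg h]
  have hgap : 0 ≤ ω ^ 2 * ((1 + h * b) ^ 2 * ω ^ 2 + a * (a * h ^ 2 - 2)) :=
    mul_nonneg (sq_nonneg ω) (add_nonneg (by positivity) (mul_nonneg ha (by linarith)))
  linarith [normSq_pd_denominator_sub_numerator a b h ω]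

theorem norm_div_le_one_of_normSq_le {z w : ℂ} (h : normSq z ≤ normSq w) : ‖z / w‖ ≤ 1 := by
  rw [norm_div]
  refine div_le_one_of_le₀ ?_ (norm_nonneg w)
  rw [normSq_eq_norm_sq, normSq_eq_norm_sq] at h
  exact (pow_le_pow_iff_left₀ (norm_nonneg z) (norm_nonneg w) two_ne_zero).1 h

theorem pd_headway_sensitivity_sup_is_one_attained_at_zero_general
    (a b h : ℝ) (ha : 0 < a) (hha : 2 / a ≤ h ^ 2)
    (K D T : ℂ → ℂ)
    (hK : ∀ s : ℂ, K s = (b : ℂ) * s + (a : ℂ))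
    (hD : ∀ s : ℂ, D s = s ^ 2 + (1 + (h : ℂ) * s) * K s)
    (hT : ∀ s : ℂ, T s = K s / D s) :
    IsGreatest (Set.range fun ω : ℝ => ‖T (Complex.I * (ω : ℂ))‖) 1 ∧
    ‖T (Complex.I * ((0 : ℝ) : ℂ))‖ = 1 := by
  have hah : 2 ≤ a * h ^ 2 := by
    rw [div_le_iff₀ ha] at hha
    linarith
  have hzero : ‖T (I * ((0 : ℝ) : ℂ))‖ = 1 := by
    have ha' : (a : ℂ) ≠ 0 := ofReal_ne_zero.2 ha.ne'
    simp [hT, hD, hK, ha']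
  refine ⟨⟨⟨0, hzero⟩, ?_⟩, hzero⟩
  rintro _ ⟨ω, rfl⟩
  simp only [hT, hD, hK]
  exact norm_div_le_one_of_normSq_le (normSq_pd_numerator_le_denominator b h ω hah)

/-- For the PD controller `K(s) = b s + a` with `a, b > 0` and time headway `h > 0`
satisfying `h² ≥ 2/a`, with `D(s) = s² + (1 + h s) K(s)` and `T(s) = K(s)/D(s)`,
the supremum over real `ω` of `|T(jω)|` equals `1`, and it is attained at `ω = 0`. -/
theorem pd_headway_sensitivity_sup_is_one_attained_at_zero
    (a b h : ℝ) (ha : 0 < a) (hb : 0 < b) (hh : 0 < h) (hha : 2 / a ≤ h ^ 2)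
    (K D T : ℂ → ℂ)
    (hK : ∀ s : ℂ, K s = (b : ℂ) * s + (a : ℂ))
    (hD : ∀ s : ℂ, D s = s ^ 2 + (1 + (h : ℂ) * s) * K s)
    (hT : ∀ s : ℂ, T s = K s / D s) :
    IsGreatest (Set.range fun ω : ℝ => ‖T (Complex.I * (ω : ℂ))‖) 1 ∧
    ‖T (Complex.I * ((0 : ℝ) : ℂ))‖ = 1 :=
  pd_headway_sensitivity_sup_is_one_attained_at_zero_general a b h ha hha K D T hK hD hT
end

section
/- Let T be a complex number with t := |T| < 1 and let N ≥ 2. Let B be the N × (N+1) complex matrix with rows indexed by i ∈ {1, …, N} and columns indexed by n ∈ {0, 1, …, N}, whose (i, n) entry equals T^{i−n} if 2 ≤ n ≤ i and 0 otherwise. Then the spectral norm (the operator norm induced by the Euclidean norms) of B satisfies ‖B‖² ≤ 2 / ((1 − t²)·(1 − t)). -/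
/-!
The matrix `B` is lower-triangular Toeplitz with entries of modulus `t ^ k`, `k` distinct along
each row and each column, so all its row and column `ℓ¹`-sums are at most `∑ t ^ k = (1 - t)⁻¹`.
Since `Bᴴ B` is Hermitian, `‖B‖² = ‖Bᴴ B‖` is its spectral radius, which (Gershgorin) is at most
the largest row sum of `Bᴴ B`, hence at most `(1 - t)⁻² ≤ 2 / ((1 - t²)(1 - t))`.
-/

open scoped Matrix.Norms.L2Operator

open Finset

namespace Matrix

theorem sum_norm_mul_apply_le {l m n α : Type*} [Fintype m] [Fintype n] [SeminormedRing α]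
    (A : Matrix l m α) (B : Matrix m n α) (i : l) {r s : ℝ} (hA : ∑ j, ‖A i j‖ ≤ r)
    (hB : ∀ j, ∑ k, ‖B j k‖ ≤ s) (hs : 0 ≤ s) : ∑ k, ‖(A * B) i k‖ ≤ r * s :=
  calc ∑ k, ‖(A * B) i k‖ ≤ ∑ k, ∑ j, ‖A i j‖ * ‖B j k‖ :=
        sum_le_sum fun k _ => (norm_sum_le _ _).trans (sum_le_sum fun j _ => norm_mul_le _ _)
    _ = ∑ j, ‖A i j‖ * ∑ k, ‖B j k‖ := by simp_rw [mul_sum]; exact sum_comm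
    _ ≤ ∑ j, ‖A i j‖ * s := sum_le_sum fun j _ => mul_le_mul_of_nonneg_left (hB j) (norm_nonneg _)
    _ = (∑ j, ‖A i j‖) * s := (sum_mul _ _ _).symm
    _ ≤ r * s := mul_le_mul_of_nonneg_right hA hs

/-- The largest row sum is the `ℓ^∞` operator norm, an algebra norm on matrices. -/
theorem spectralRadius_le_of_forall_sum_norm_le {n 𝕜 : Type*} [Fintype n] [DecidableEq n]
    [RCLike 𝕜] (A : Matrix n n 𝕜) {r : ℝ} (h : ∀ i, ∑ j, ‖A i j‖ ≤ r) :
    spectralRadius 𝕜 A ≤ ENNReal.ofReal r := by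
  cases isEmpty_or_nonempty n
  · simp [spectralRadius, spectrum, resolventSet, Subsingleton.elim _ (1 : Matrix n n 𝕜)]
  refine (@spectrum.spectralRadius_le_nnnorm 𝕜 (Matrix n n 𝕜) _ Matrix.linftyOpNormedRing
    Matrix.linftyOpNormedAlgebra ?_ linfty_opNormOneClass A).trans ?_
  · exact inferInstanceAs (CompleteSpace (Matrix n n 𝕜))
  · rw [linfty_opNNNorm_def, ENNReal.ofReal]
    refine ENNReal.coe_le_coe.2 (Finset.sup_le fun i _ => ?_)
    exact NNReal.le_toNNReal_of_coe_le (by simpa using h i)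

theorem l2_opNorm_sq_le_of_forall_sum_norm_le {m n : Type*} [Fintype m] [Fintype n]
    [DecidableEq n] (A : Matrix m n ℂ) {r c : ℝ} (hr : 0 ≤ r) (hc : 0 ≤ c)
    (hrow : ∀ i, ∑ j, ‖A i j‖ ≤ r) (hcol : ∀ j, ∑ i, ‖A i j‖ ≤ c) : ‖A‖ ^ 2 ≤ r * c := by
  have hrow' : ∀ j, ∑ k, ‖(Aᴴ * A) j k‖ ≤ c * r := fun j =>
    sum_norm_mul_apply_le _ _ j (by simpa using hcol j) hrow hr
  calc ‖A‖ ^ 2 = ‖Aᴴ * A‖ := by rw [sq, l2_opNorm_conjTranspose_mul_self]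
    _ = (spectralRadius ℂ (Aᴴ * A)).toReal :=
        (isHermitian_conjTranspose_mul_self A).isSelfAdjoint
          |>.toReal_spectralRadius_complex_eq_norm |>.symm
    _ ≤ c * r := ENNReal.toReal_le_of_le_ofReal (by positivity)
        (spectralRadius_le_of_forall_sum_norm_le _ hrow')
    _ = r * c := mul_comm c r

end Matrix

theorem Finset.sum_pow_le_inv_one_sub_of_injOn {ι : Type*} {t : ℝ} (h0 : 0 ≤ t) (h1 : t < 1)
    (s : Finset ι) {e : ι → ℕ} (he : Set.InjOn e s) : ∑ j ∈ s, t ^ e j ≤ (1 - t)⁻¹ := by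
  calc ∑ j ∈ s, t ^ e j = ∑ k ∈ s.image e, t ^ k := (sum_image he).symm
    _ ≤ ∑' k : ℕ, t ^ k :=
        (summable_geometric_of_lt_one h0 h1).sum_le_tsum _ fun k _ => pow_nonneg h0 k
    _ = (1 - t)⁻¹ := tsum_geometric_of_lt_one h0 h1

theorem toeplitz_power_matrix_l2_opNorm_bound_general
    (T : ℂ) (ht : ‖T‖ < 1) (N : ℕ)
    (B : Matrix (Fin N) (Fin (N + 1)) ℂ)
    (hB : ∀ (i : Fin N) (n : Fin (N + 1)),
      B i n = if 2 ≤ (n : ℕ) ∧ (n : ℕ) ≤ (i : ℕ) + 1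
        then T ^ ((i : ℕ) + 1 - (n : ℕ)) else 0) :
    ‖B‖ ^ 2 ≤ 2 / ((1 - ‖T‖ ^ 2) * (1 - ‖T‖)) := by
  set t := ‖T‖
  have ht0 : 0 ≤ t := norm_nonneg T
  have hentry : ∀ i n, ‖B i n‖ = if 2 ≤ (n : ℕ) ∧ (n : ℕ) ≤ (i : ℕ) + 1
      then t ^ ((i : ℕ) + 1 - (n : ℕ)) else 0 := fun i n => by
    rw [hB]; split_ifs <;> simp [t]
  have hrow : ∀ i, ∑ n, ‖B i n‖ ≤ (1 - t)⁻¹ := fun i => by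
    simp_rw [hentry, ← sum_filter]
    exact sum_pow_le_inv_one_sub_of_injOn ht0 ht _ fun a ha b hb hab => by
      simp only [coe_filter, Set.mem_ofPred_eq, mem_univ, true_and] at ha hb; omega
  have hcol : ∀ n, ∑ i, ‖B i n‖ ≤ (1 - t)⁻¹ := fun n => by
    simp_rw [hentry, ← sum_filter]
    exact sum_pow_le_inv_one_sub_of_injOn ht0 ht _ fun a ha b hb hab => by
      simp only [coe_filter, Set.mem_ofPred_eq, mem_univ, true_and] at ha hb; omega
  have h1t : 0 < 1 - t := by linarith
  calc ‖B‖ ^ 2 ≤ (1 - t)⁻¹ * (1 - t)⁻¹ :=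
        B.l2_opNorm_sq_le_of_forall_sum_norm_le (by positivity) (by positivity) hrow hcol
    _ ≤ 2 / ((1 - t ^ 2) * (1 - t)) := by
        rw [← mul_inv, inv_eq_one_div,
          div_le_div_iff₀ (by positivity) (by nlinarith [mul_pos h1t h1t])]
        -- `(1 - t²)(1 - t) = (1 + t)(1 - t)²`
        nlinarith [pow_pos h1t 3]

/-- Spectral-norm bound on the matrix `B` from the proof of Theorem 1: with rows
`i ∈ {1,…,N}` and columns `n ∈ {0,…,N}`, entries `T^{i−n}` for `2 ≤ n ≤ i` and `0`
otherwise, and `t = |T| < 1`, one has `‖B‖² ≤ 2 / ((1 − t²)(1 − t))`. Here `‖·‖` is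
the operator norm induced by the Euclidean norms (the scoped `Matrix.L2OpNorm`). -/
theorem toeplitz_power_matrix_l2_opNorm_bound
    (T : ℂ) (ht : ‖T‖ < 1) (N : ℕ) (hN : 2 ≤ N)
    (B : Matrix (Fin N) (Fin (N + 1)) ℂ)
    (hB : ∀ (i : Fin N) (n : Fin (N + 1)),
      B i n = if 2 ≤ (n : ℕ) ∧ (n : ℕ) ≤ (i : ℕ) + 1
        then T ^ ((i : ℕ) + 1 - (n : ℕ)) else 0) :
    ‖B‖ ^ 2 ≤ 2 / ((1 - ‖T‖ ^ 2) * (1 - ‖T‖)) :=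
  toeplitz_power_matrix_l2_opNorm_bound_general T ht N B hB
end

section
/- Let a, b, h > 0 be real numbers, and let K(s) = b·s + a, D(s) = s² + (1 + h·s)·K(s), T(s) = K(s)/D(s). Then the limit as the real number ω tends to 0 of (1 − |T(jω)|²)/ω² exists and equals h² − 2/a. Here j denotes the imaginary unit. -/
open Complex Filter Topology

/-
On the imaginary axis `|K(jω)|² = a² + b²ω²` and
`|D(jω)|² = (a - (1 + hb)ω²)² + (b + ha)²ω²`. Their difference is divisible by `ω²`,
with quotient `a²h² - 2a + (1 + hb)²ω²`, so `(1 - |T(jω)|²)/ω²` equals a rational function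
of `ω` that is continuous at `0` (its denominator there is `a² ≠ 0`), with value
`(a²h² - 2a)/a² = h² - 2/a`.
-/

theorem tendsto_one_sub_div_div_sq {N M R : ℝ → ℝ} (hM : ContinuousAt M 0)
    (hR : ContinuousAt R 0) (hM0 : M 0 ≠ 0) (hMN : ∀ ω, M ω - N ω = ω ^ 2 * R ω) :
    Tendsto (fun ω => (1 - N ω / M ω) / ω ^ 2) (𝓝[≠] 0) (𝓝 (R 0 / M 0)) := by
  have hlim : Tendsto (fun ω => R ω / M ω) (𝓝[≠] 0) (𝓝 (R 0 / M 0)) :=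
    (hR.div hM hM0).tendsto.mono_left nhdsWithin_le_nhds
  refine hlim.congr' ?_
  filter_upwards [self_mem_nhdsWithin, nhdsWithin_le_nhds (hM.eventually_ne hM0)]
    with ω (hω : ω ≠ 0) hMω
  rw [one_sub_div hMω, hMN]
  field_simp

theorem norm_sq_pd_numerator_at_I_mul (a b ω : ℝ) :
    ‖(b : ℂ) * (I * ω) + a‖ ^ 2 = a ^ 2 + b ^ 2 * ω ^ 2 := by
  have hre : (b : ℂ) * (I * ω) + a = a + (b * ω : ℝ) * I := by push_cast; ring
  rw [hre, Complex.sq_norm, normSq_add_mul_I]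
  ring

theorem norm_sq_pd_denominator_at_I_mul (a b h ω : ℝ) :
    ‖(I * ω) ^ 2 + (1 + h * (I * ω)) * ((b : ℂ) * (I * ω) + a)‖ ^ 2
      = (a - (1 + h * b) * ω ^ 2) ^ 2 + (b + h * a) ^ 2 * ω ^ 2 := by
  have hre : (I * ω) ^ 2 + (1 + h * (I * ω)) * ((b : ℂ) * (I * ω) + a)
      = (a - (1 + h * b) * ω ^ 2 : ℝ) + ((b + h * a) * ω : ℝ) * I := by
    push_cast
    linear_combination (1 + (h : ℂ) * b) * (ω : ℂ) ^ 2 * I_sq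
  rw [hre, Complex.sq_norm, normSq_add_mul_I]
  ring

theorem pd_headway_sensitivity_low_frequency_limit_general
    (a b h : ℝ) (ha : 0 < a)
    (K D T : ℂ → ℂ)
    (hK : ∀ s : ℂ, K s = (b : ℂ) * s + (a : ℂ))
    (hD : ∀ s : ℂ, D s = s ^ 2 + (1 + (h : ℂ) * s) * K s)
    (hT : ∀ s : ℂ, T s = K s / D s) :
    Filter.Tendsto
      (fun ω : ℝ => (1 - ‖T (Complex.I * (ω : ℂ))‖ ^ 2) / ω ^ 2)
      (𝓝[≠] 0) (𝓝 (h ^ 2 - 2 / a)) := by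
  have hT_sq : ∀ ω : ℝ, ‖T (I * ω)‖ ^ 2
      = (a ^ 2 + b ^ 2 * ω ^ 2) / ((a - (1 + h * b) * ω ^ 2) ^ 2 + (b + h * a) ^ 2 * ω ^ 2) := by
    intro ω
    rw [hT, norm_div, div_pow, hD, hK, norm_sq_pd_numerator_at_I_mul,
      norm_sq_pd_denominator_at_I_mul]
  have hlim := tendsto_one_sub_div_div_sq
    (N := fun ω => a ^ 2 + b ^ 2 * ω ^ 2)
    (M := fun ω => (a - (1 + h * b) * ω ^ 2) ^ 2 + (b + h * a) ^ 2 * ω ^ 2)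
    (R := fun ω => a ^ 2 * h ^ 2 - 2 * a + (1 + h * b) ^ 2 * ω ^ 2)
    (by fun_prop) (by fun_prop) (by simpa using ha.ne') (fun ω => by ring)
  simp_rw [hT_sq]
  convert hlim using 2
  field_simp
  ring

/-- Low-frequency expansion: for the PD controller `K(s) = b s + a` with time headway
`h > 0`, `D(s) = s² + (1 + h s) K(s)` and `T = K/D`, the limit as `ω → 0` of
`(1 − |T(jω)|²)/ω²` exists and equals `h² − 2/a`. -/
theorem pd_headway_sensitivity_low_frequency_limit
    (a b h : ℝ) (ha : 0 < a) (hb : 0 < b) (hh : 0 < h)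
    (K D T : ℂ → ℂ)
    (hK : ∀ s : ℂ, K s = (b : ℂ) * s + (a : ℂ))
    (hD : ∀ s : ℂ, D s = s ^ 2 + (1 + (h : ℂ) * s) * K s)
    (hT : ∀ s : ℂ, T s = K s / D s) :
    Filter.Tendsto
      (fun ω : ℝ => (1 - ‖T (Complex.I * (ω : ℂ))‖ ^ 2) / ω ^ 2)
      (𝓝[≠] 0) (𝓝 (h ^ 2 - 2 / a)) :=
  pd_headway_sensitivity_low_frequency_limit_general a b h ha K D T hK hD hT
end

section
/- Let a, b > 0 and h > 0 be real numbers with h² > 2/a, and let K(s) = b·s + a, D(s) = s² + (1 + h·s)·K(s), T(s) = K(s)/D(s), P(s) = s²/D(s)². Then there exist real numbers ω₀ > 0 and C > 0 such that, for every real ω with 0 < |ω| ≤ ω₀, one has 1 − |T(jω)| > 0 and |P(jω)| ≤ C·(1 − |T(jω)|). Here j denotes the imaginary unit. -/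
/-!
On the imaginary axis, `|D(jω)|² - |K(jω)|² = a(ah² - 2)ω² + (1 + hb)²ω⁴`, which is at least
`a(ah² - 2)ω² > 0` when `h² > 2/a`. Hence `|T(jω)| < 1`, and `|D|(|D| - |K|) ≥ (|D|² - |K|²)/2`
because the difference is `(|D| - |K|)²/2`; dividing by `|D|²` bounds `|P(jω)| = ω²/|D|²` by
`2/(a(ah² - 2))·(1 - |T(jω)|)` for every `ω ≠ 0`.
-/

open Complex

lemma div_sq_le_mul_one_sub_div_of_sq_sub_sq {k d c x : ℝ} (hk : 0 ≤ k) (hd : 0 ≤ d)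
    (hc : 0 < c) (hx : 0 < x) (hgap : c * x ≤ d ^ 2 - k ^ 2) :
    0 < 1 - k / d ∧ x / d ^ 2 ≤ 2 / c * (1 - k / d) := by
  have hkd : k < d := by nlinarith
  have hd_pos : 0 < d := hk.trans_lt hkd
  refine ⟨by rw [sub_pos, div_lt_one hd_pos]; exact hkd, ?_⟩
  rw [one_sub_div hd_pos.ne', div_mul_div_comm, div_le_div_iff₀ (by positivity) (by positivity)]
  nlinarith [sq_nonneg (d - k)]

lemma normSq_headway_sub_normSq_pd (a b h ω : ℝ) :
    normSq ((I * ω) ^ 2 + (1 + h * (I * ω)) * (b * (I * ω) + a)) - normSq (b * (I * ω) + a)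
      = a * (a * h ^ 2 - 2) * ω ^ 2 + (1 + h * b) ^ 2 * ω ^ 4 := by
  simp only [normSq_apply, add_re, add_im, mul_re, mul_im, pow_two, I_re, I_im, ofReal_re,
    ofReal_im, one_re, one_im]
  ring

theorem pd_headway_P_bounded_by_gap_low_frequency_general
    (a b h : ℝ) (ha : 0 < a) (hha : 2 / a < h ^ 2)
    (K D T P : ℂ → ℂ)
    (hK : ∀ s : ℂ, K s = (b : ℂ) * s + (a : ℂ))
    (hD : ∀ s : ℂ, D s = s ^ 2 + (1 + (h : ℂ) * s) * K s)
    (hT : ∀ s : ℂ, T s = K s / D s)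
    (hP : ∀ s : ℂ, P s = s ^ 2 / (D s) ^ 2) :
    ∃ ω₀ C : ℝ, 0 < ω₀ ∧ 0 < C ∧
      ∀ ω : ℝ, 0 < |ω| → |ω| ≤ ω₀ →
        0 < 1 - ‖T (Complex.I * (ω : ℂ))‖ ∧
        ‖P (Complex.I * (ω : ℂ))‖
          ≤ C * (1 - ‖T (Complex.I * (ω : ℂ))‖) := by
  have hc : 0 < a * (a * h ^ 2 - 2) :=
    mul_pos ha (by rw [div_lt_iff₀ ha] at hha; linarith)
  refine ⟨1, 2 / (a * (a * h ^ 2 - 2)), one_pos, by positivity, fun ω hω _ => ?_⟩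
  have hgap : a * (a * h ^ 2 - 2) * ω ^ 2 ≤ ‖D (I * ω)‖ ^ 2 - ‖K (I * ω)‖ ^ 2 := by
    rw [Complex.sq_norm, Complex.sq_norm, hD, hK, normSq_headway_sub_normSq_pd]
    nlinarith [pow_nonneg (sq_nonneg ω) 2, sq_nonneg (1 + h * b)]
  have hPnorm : ‖P (I * ω)‖ = ω ^ 2 / ‖D (I * ω)‖ ^ 2 := by
    rw [hP, norm_div, norm_pow, norm_pow, norm_mul, norm_I, norm_real, Real.norm_eq_abs,
      one_mul, sq_abs]
  rw [hT, norm_div, hPnorm]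
  exact div_sq_le_mul_one_sub_div_of_sq_sub_sq (norm_nonneg _) (norm_nonneg _) hc
    (by rw [← sq_abs]; positivity) hgap

/-- Low-frequency bound from the proof of Theorem 3: for the PD controller with
`h² > 2/a`, there are `ω₀ > 0` and `C > 0` such that for `0 < |ω| ≤ ω₀` one has
`1 − |T(jω)| > 0` and `|P(jω)| ≤ C (1 − |T(jω)|)`. -/
theorem pd_headway_P_bounded_by_gap_low_frequency
    (a b h : ℝ) (ha : 0 < a) (hb : 0 < b) (hh : 0 < h) (hha : 2 / a < h ^ 2)
    (K D T P : ℂ → ℂ)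
    (hK : ∀ s : ℂ, K s = (b : ℂ) * s + (a : ℂ))
    (hD : ∀ s : ℂ, D s = s ^ 2 + (1 + (h : ℂ) * s) * K s)
    (hT : ∀ s : ℂ, T s = K s / D s)
    (hP : ∀ s : ℂ, P s = s ^ 2 / (D s) ^ 2) :
    ∃ ω₀ C : ℝ, 0 < ω₀ ∧ 0 < C ∧
      ∀ ω : ℝ, 0 < |ω| → |ω| ≤ ω₀ →
        0 < 1 - ‖T (Complex.I * (ω : ℂ))‖ ∧
        ‖P (Complex.I * (ω : ℂ))‖
          ≤ C * (1 - ‖T (Complex.I * (ω : ℂ))‖) :=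
  pd_headway_P_bounded_by_gap_low_frequency_general a b h ha hha K D T P hK hD hT hP
end

section
/- Let a, b > 0 and h > 0 be real numbers with h² ≥ 2/a, and let K(s) = b·s + a, D(s) = s² + (1 + h·s)·K(s), T(s) = K(s)/D(s). Then for every ω₀ > 0 there exists α ∈ (0, 1) such that |T(jω)| ≤ α for every real ω with |ω| ≥ ω₀. Here j denotes the imaginary unit. -/
/-!
On the imaginary axis `|K(jω)|² = a² + b²ω²` and
`|D(jω)|² = |K(jω)|² + (1 + hb)²ω⁴ + a(ah² - 2)ω²`, so under `ah² ≥ 2` we get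
`|D(jω)|² ≥ (1 + δ(ω²)) |K(jω)|²` with `δ(x) = (1 + hb)² x² / (a² + b²x)`.
Since `δ` is increasing on `x ≥ 0`, `|T(jω)| ≤ (1 + δ(ω₀²))^(-1/2) < 1` for `|ω| ≥ ω₀`.
-/

open Complex

lemma normSq_ofReal_mul_I_mul_add (a b ω : ℝ) :
    normSq ((b : ℂ) * (I * ω) + a) = a ^ 2 + b ^ 2 * ω ^ 2 := by
  have : (b : ℂ) * (I * ω) + a = (a : ℝ) + ((b * ω : ℝ) : ℂ) * I := by push_cast; ring
  rw [this, normSq_add_mul_I]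
  ring

lemma normSq_headway_charpoly (a b h ω : ℝ) :
    normSq ((I * ω) ^ 2 + (1 + (h : ℂ) * (I * ω)) * ((b : ℂ) * (I * ω) + a)) =
      normSq ((b : ℂ) * (I * ω) + a) + (1 + h * b) ^ 2 * ω ^ 4 +
        a * (a * h ^ 2 - 2) * ω ^ 2 := by
  have : (I * ω) ^ 2 + (1 + (h : ℂ) * (I * ω)) * ((b : ℂ) * (I * ω) + a) =
      ((a - (1 + h * b) * ω ^ 2 : ℝ) : ℂ) + (((b + h * a) * ω : ℝ) : ℂ) * I := by
    push_cast
    ring_nf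
    rw [I_sq]
    ring
  rw [this, normSq_add_mul_I, normSq_ofReal_mul_I_mul_add]
  ring

lemma monotoneOn_sq_div_add_mul {p q : ℝ} (hp : 0 < p) (hq : 0 ≤ q) :
    MonotoneOn (fun x : ℝ => x ^ 2 / (p + q * x)) (Set.Ici 0) := by
  intro x (hx : 0 ≤ x) y (hy : 0 ≤ y) hxy
  rw [div_le_div_iff₀ (by positivity) (by positivity)]
  nlinarith [mul_nonneg (mul_nonneg hq (mul_nonneg hx hy)) (sub_nonneg.2 hxy),
    mul_le_mul hxy hxy hx hy]

lemma norm_div_le_inv_sqrt_of_mul_normSq_le {z w : ℂ} {t : ℝ} (ht : 0 < t)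
    (h : t * normSq z ≤ normSq w) : ‖z / w‖ ≤ (√t)⁻¹ := by
  have hz : √t * ‖z‖ ≤ ‖w‖ := by
    rw [← Real.sqrt_sq (norm_nonneg z), ← Real.sqrt_sq (norm_nonneg w), ← Real.sqrt_mul ht.le,
      ← normSq_eq_norm_sq, ← normSq_eq_norm_sq]
    exact Real.sqrt_le_sqrt h
  rw [norm_div]
  refine div_le_of_le_mul₀ (norm_nonneg w) (by positivity) ?_
  rwa [← div_eq_inv_mul, le_div_iff₀' (Real.sqrt_pos.2 ht)]

/-- Uniform bound away from `1` outside any neighborhood of `ω = 0`: for the PD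
controller with `h² ≥ 2/a`, for every `ω₀ > 0` there is `α ∈ (0,1)` with
`|T(jω)| ≤ α` whenever `|ω| ≥ ω₀`. -/
theorem pd_headway_sensitivity_uniformly_contractive_away_from_zero
    (a b h : ℝ) (ha : 0 < a) (hb : 0 < b) (hh : 0 < h) (hha : 2 / a ≤ h ^ 2)
    (K D T : ℂ → ℂ)
    (hK : ∀ s : ℂ, K s = (b : ℂ) * s + (a : ℂ))
    (hD : ∀ s : ℂ, D s = s ^ 2 + (1 + (h : ℂ) * s) * K s)
    (hT : ∀ s : ℂ, T s = K s / D s) :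
    ∀ ω₀ : ℝ, 0 < ω₀ → ∃ α : ℝ, 0 < α ∧ α < 1 ∧
      ∀ ω : ℝ, ω₀ ≤ |ω| → ‖T (Complex.I * (ω : ℂ))‖ ≤ α := by
  intro ω₀ hω₀
  set δ : ℝ → ℝ := fun x => (1 + h * b) ^ 2 * (x ^ 2 / (a ^ 2 + b ^ 2 * x))
  have hδ₀ : 0 < δ (ω₀ ^ 2) := by positivity
  refine ⟨(√(1 + δ (ω₀ ^ 2)))⁻¹, by positivity,
    inv_lt_one_of_one_lt₀ (Real.lt_sqrt_of_sq_lt (by linarith)), fun ω hω => ?_⟩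
  have hδω : δ (ω₀ ^ 2) ≤ δ (ω ^ 2) := by
    have hω2 : ω₀ ^ 2 ≤ ω ^ 2 := by rw [← sq_abs ω]; gcongr
    exact mul_le_mul_of_nonneg_left (monotoneOn_sq_div_add_mul (by positivity) (sq_nonneg b)
      (sq_nonneg ω₀) (sq_nonneg ω) hω2) (sq_nonneg _)
  have hah : 0 ≤ a * (a * h ^ 2 - 2) * ω ^ 2 := by
    have : 2 ≤ a * h ^ 2 := by rwa [div_le_iff₀' ha] at hha
    exact mul_nonneg (mul_nonneg ha.le (sub_nonneg.2 this)) (sq_nonneg ω)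
  rw [hT, hD, hK]
  refine norm_div_le_inv_sqrt_of_mul_normSq_le (by linarith) ?_
  rw [normSq_headway_charpoly, normSq_ofReal_mul_I_mul_add]
  calc (1 + δ (ω₀ ^ 2)) * (a ^ 2 + b ^ 2 * ω ^ 2)
      ≤ (1 + δ (ω ^ 2)) * (a ^ 2 + b ^ 2 * ω ^ 2) := by gcongr
    _ = a ^ 2 + b ^ 2 * ω ^ 2 + (1 + h * b) ^ 2 * ω ^ 4 := by simp only [δ]; field_simp
    _ ≤ _ := by linarith
end

section
/- (Theorem 1 of the paper, frequency-domain form.) There exist real numbers a, b, h > 0 and a constant C > 0 with the following property. Set K(s) = b·s + a, D(s) = s² + (1 + h·s)·K(s), T(s) = K(s)/D(s), L(s) = (1 + h·s)/D(s), P(s) = s²/D(s)². Then for every N ≥ 1 and all functions d̂₁, …, d̂_N ∈ L²(ℝ, ℂ), the error functions defined by ê₁(ω) = −L(jω)·d̂₁(ω) and, for i ∈ {2, …, N}, ê_i(ω) = −L(jω)·d̂_i(ω) + Σ_{m=2}^{i} T(jω)^{i−m}·P(jω)·d̂_{m−1}(ω), satisfy Σ_{i=1}^{N} ‖ê_i‖²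 ≤ C · Σ_{m=1}^{N} ‖d̂_m‖². Here j denotes the imaginary unit and ‖f‖ = (∫_ℝ |f(ω)|² dω)^{1/2} is the L² norm. -/
/-!
For `a = 4`, `b = 1`, `h = 1` the characteristic polynomial is `D(s) = 2s² + 5s + 4`, and on the
imaginary axis `‖T‖ ≤ 1`, `‖L‖² ≤ 1/8` and `‖P‖ ≤ (1 - ‖T‖) / 4`. At a fixed frequency the sum
`∑ₘ Tⁱ⁻ᵐ P d̂ₘ₋₁` is a strictly causal convolution of `(d̂ₘ)ₘ` with the kernel `P Tⁿ`, whose `ℓ¹`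
norm is `‖P‖ / (1 - ‖T‖) ≤ 1/4`, so by Young's inequality its `ℓ²` norm over `i` is at most a
quarter of that of `(d̂ₘ)ₘ`. With `‖x + y‖² ≤ 2‖x‖² + 2‖y‖²` this gives
`∑ᵢ ‖êᵢ(ω)‖² ≤ 3/8 ∑ₘ ‖d̂ₘ(ω)‖²` at every `ω`, which integrates to the claim with `C = 3/8`.
-/

open MeasureTheory Finset Complex
open scoped ENNReal

section StrictlyCausalConvolution

variable (N : ℕ) {κ : ℕ → ℝ}

lemma sum_comp_le_tsum_of_injOn (hκ0 : ∀ n, 0 ≤ κ n) (hκ : Summable κ) (s : Finset ℕ)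
    {g : ℕ → ℕ} (hg : Set.InjOn g s) : ∑ m ∈ s, κ (g m) ≤ ∑' n, κ n := by
  rw [← sum_image hg]
  exact hκ.sum_le_tsum _ fun n _ => hκ0 n

lemma sum_sq_shift_le (x : ℕ → ℝ) :
    ∑ m ∈ Icc 2 N, x (m - 1) ^ 2 ≤ ∑ m ∈ Icc 1 N, x m ^ 2 := by
  rw [← sum_image (g := fun m => m - 1) (f := fun k => x k ^ 2)
    fun a ha b hb hab => by simp only [coe_Icc, Set.mem_Icc] at ha hb hab; omega]
  refine sum_le_sum_of_subset_of_nonneg (fun k hk => ?_) fun k _ _ => sq_nonneg _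
  simp only [mem_image, mem_Icc] at hk ⊢
  omega

/-- Young's inequality `‖κ ⋆ x‖₂ ≤ ‖κ‖₁ ‖x‖₂`. -/
theorem sum_sq_strictCausalConv_le (hκ0 : ∀ n, 0 ≤ κ n) (hκ : Summable κ) (x : ℕ → ℝ) :
    ∑ i ∈ Icc 1 N, (∑ m ∈ Icc 2 i, κ (i - m) * x (m - 1)) ^ 2
      ≤ (∑' n, κ n) ^ 2 * ∑ m ∈ Icc 1 N, x m ^ 2 := by
  set A := ∑' n, κ n
  have hA : 0 ≤ A := tsum_nonneg hκ0
  -- weighted Cauchy–Schwarz with weights `κ (i - m)`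
  have hCS : ∀ i, (∑ m ∈ Icc 2 i, κ (i - m) * x (m - 1)) ^ 2
      ≤ A * ∑ m ∈ Icc 2 i, κ (i - m) * x (m - 1) ^ 2 := fun i => by
    refine (sum_sq_le_sum_mul_sum_of_sq_le_mul _ (f := fun m => κ (i - m))
      (g := fun m => κ (i - m) * x (m - 1) ^ 2) (fun m _ => hκ0 _)
      (fun m _ => mul_nonneg (hκ0 _) (sq_nonneg _)) fun m _ => le_of_eq (by ring)).trans ?_
    refine mul_le_mul_of_nonneg_right ?_ (sum_nonneg fun m _ => mul_nonneg (hκ0 _) (sq_nonneg _))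
    exact sum_comp_le_tsum_of_injOn hκ0 hκ _ fun a ha b hb _ => by
      simp only [coe_Icc, Set.mem_Icc] at ha hb; omega
  calc ∑ i ∈ Icc 1 N, (∑ m ∈ Icc 2 i, κ (i - m) * x (m - 1)) ^ 2
      ≤ ∑ i ∈ Icc 1 N, A * ∑ m ∈ Icc 2 i, κ (i - m) * x (m - 1) ^ 2 := sum_le_sum fun i _ => hCS i
    _ = A * ∑ m ∈ Icc 2 N, (∑ i ∈ Icc m N, κ (i - m)) * x (m - 1) ^ 2 := by
        rw [← mul_sum, sum_comm' (t' := Icc 2 N) (s' := fun m => Icc m N)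
          fun i m => by simp only [mem_Icc]; omega]
        simp_rw [sum_mul]
    _ ≤ A * ∑ m ∈ Icc 2 N, A * x (m - 1) ^ 2 := by
        gcongr with m hm
        exact sum_comp_le_tsum_of_injOn hκ0 hκ _ fun a ha b hb _ => by
          simp only [coe_Icc, Set.mem_Icc] at ha hb; omega
    _ ≤ A ^ 2 * ∑ m ∈ Icc 1 N, x m ^ 2 := by
        rw [← mul_sum, ← mul_assoc, ← sq]
        exact mul_le_mul_of_nonneg_left (sum_sq_shift_le N x) (sq_nonneg A)

end StrictlyCausalConvolution

lemma summable_geometric_kernel_and_tsum_le {q r A : ℝ} (hr0 : 0 ≤ r) (hr1 : r ≤ 1) (hq : 0 ≤ q)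
    (hA : 0 ≤ A) (hqr : q ≤ A * (1 - r)) :
    Summable (fun n => q * r ^ n) ∧ ∑' n, q * r ^ n ≤ A := by
  rcases hr1.lt_or_eq with hr1 | rfl
  · refine ⟨(summable_geometric_of_lt_one hr0 hr1).mul_left q, ?_⟩
    rw [tsum_mul_left, tsum_geometric_of_lt_one hr0 hr1, ← div_eq_mul_inv,
      div_le_iff₀ (sub_pos.mpr hr1)]
    exact hqr
  · obtain rfl : q = 0 := le_antisymm (by simpa using hqr) hq
    simpa using hA

theorem sum_sq_norm_spacingError_le {𝕜 : Type*} [NormedDivisionRing 𝕜] (N : ℕ) {t p : 𝕜} {A : ℝ}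
    (hA : 0 ≤ A) (ht : ‖t‖ ≤ 1) (hp : ‖p‖ ≤ A * (1 - ‖t‖)) (l : 𝕜) (d : ℕ → 𝕜) :
    ∑ i ∈ Icc 1 N, ‖-l * d i + ∑ m ∈ Icc 2 i, t ^ (i - m) * p * d (m - 1)‖ ^ 2
      ≤ 2 * (‖l‖ ^ 2 + A ^ 2) * ∑ m ∈ Icc 1 N, ‖d m‖ ^ 2 := by
  set κ : ℕ → ℝ := fun n => ‖p‖ * ‖t‖ ^ n
  obtain ⟨hκ, hκA⟩ :=
    summable_geometric_kernel_and_tsum_le (norm_nonneg t) ht (norm_nonneg p) hA hp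
  have hκ0 : ∀ n, 0 ≤ κ n := fun n => by positivity
  have hconv : ∀ i, ‖∑ m ∈ Icc 2 i, t ^ (i - m) * p * d (m - 1)‖
      ≤ ∑ m ∈ Icc 2 i, κ (i - m) * ‖d (m - 1)‖ := fun i =>
    norm_sum_le_of_le _ fun m _ => le_of_eq (by simp only [κ, norm_mul, norm_pow]; ring)
  have hYoung := sum_sq_strictCausalConv_le N hκ0 hκ fun m => ‖d m‖
  have hκA2 : (∑' n, κ n) ^ 2 ≤ A ^ 2 := pow_le_pow_left₀ (tsum_nonneg hκ0) hκA 2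
  calc ∑ i ∈ Icc 1 N, ‖-l * d i + ∑ m ∈ Icc 2 i, t ^ (i - m) * p * d (m - 1)‖ ^ 2
      ≤ ∑ i ∈ Icc 1 N, 2 * ((‖l‖ * ‖d i‖) ^ 2
          + (∑ m ∈ Icc 2 i, κ (i - m) * ‖d (m - 1)‖) ^ 2) := by
        refine sum_le_sum fun i _ => (pow_le_pow_left₀ (norm_nonneg _)
          (norm_add_le_of_le (by rw [norm_mul, norm_neg]) (hconv i)) 2).trans add_sq_le
    _ = 2 * ‖l‖ ^ 2 * ∑ m ∈ Icc 1 N, ‖d m‖ ^ 2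
          + 2 * ∑ i ∈ Icc 1 N, (∑ m ∈ Icc 2 i, κ (i - m) * ‖d (m - 1)‖) ^ 2 := by
        simp only [mul_add, sum_add_distrib, mul_sum, mul_pow, mul_assoc]
    _ ≤ 2 * (‖l‖ ^ 2 + A ^ 2) * ∑ m ∈ Icc 1 N, ‖d m‖ ^ 2 := by
        have := sum_nonneg fun m (_ : m ∈ Icc 1 N) => sq_nonneg ‖d m‖
        nlinarith

section SquaredL2Norm

variable {α E : Type*} [MeasurableSpace α] {μ : Measure α}

lemma eLpNorm_two_sq_eq_lintegral [NormedAddCommGroup E] (f : α → E) :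
    eLpNorm f 2 μ ^ 2 = ∫⁻ x, ‖f x‖ₑ ^ 2 ∂μ := by
  simpa using eLpNorm_nnreal_pow_eq_lintegral (f := f) (μ := μ) (p := 2) two_ne_zero

lemma sum_lintegral_le_lintegral_sum {ι : Type*} (s : Finset ι) (f : ι → α → ℝ≥0∞) :
    ∑ i ∈ s, ∫⁻ x, f i x ∂μ ≤ ∫⁻ x, ∑ i ∈ s, f i x ∂μ := by
  classical
  induction s using Finset.induction_on with
  | empty => simp
  | insert i s hi ih =>
    simp only [sum_insert hi]
    exact (add_le_add le_rfl ih).trans (le_lintegral_add _ _)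

theorem sum_eLpNorm_two_sq_le_of_ae_le {ι ι' F : Type*} [NormedAddCommGroup E]
    [NormedAddCommGroup F] (s : Finset ι) (s' : Finset ι') (f : ι → α → E) {g : ι' → α → F}
    {C : ℝ} (hC : 0 ≤ C) (hg : ∀ m ∈ s', AEStronglyMeasurable (g m) μ)
    (hfg : ∀ᵐ x ∂μ, ∑ i ∈ s, ‖f i x‖ ^ 2 ≤ C * ∑ m ∈ s', ‖g m x‖ ^ 2) :
    ∑ i ∈ s, eLpNorm (f i) 2 μ ^ 2 ≤ ENNReal.ofReal C * ∑ m ∈ s', eLpNorm (g m) 2 μ ^ 2 := by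
  simp only [eLpNorm_two_sq_eq_lintegral]
  calc ∑ i ∈ s, ∫⁻ x, ‖f i x‖ₑ ^ 2 ∂μ
      ≤ ∫⁻ x, ∑ i ∈ s, ‖f i x‖ₑ ^ 2 ∂μ := sum_lintegral_le_lintegral_sum s _
    _ ≤ ∫⁻ x, ENNReal.ofReal C * ∑ m ∈ s', ‖g m x‖ₑ ^ 2 ∂μ := by
        refine lintegral_mono_ae (hfg.mono fun x hx => ?_)
        simp only [← ofReal_norm, ← ENNReal.ofReal_pow (norm_nonneg _),
          ← ENNReal.ofReal_sum_of_nonneg fun _ _ => sq_nonneg _,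
          ← ENNReal.ofReal_mul hC]
        exact ENNReal.ofReal_le_ofReal hx
    _ = ENNReal.ofReal C * ∑ m ∈ s', ∫⁻ x, ‖g m x‖ₑ ^ 2 ∂μ := by
        rw [lintegral_const_mul' _ _ ENNReal.ofReal_ne_top,
          lintegral_finsetSum' _ fun m hm => (hg m hm).enorm.pow_const 2]

end SquaredL2Norm

/-- `D(s) = s² + (1 + h s)(b s + a)` for the gains `a = 4`, `b = 1`, `h = 1`. -/
def pdCharPoly (s : ℂ) : ℂ := 2 * s ^ 2 + 5 * s + 4

section ImaginaryAxis

variable (ω : ℝ)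

lemma sq_norm_pdCharPoly_I_mul : ‖pdCharPoly (I * ω)‖ ^ 2 = 4 * ω ^ 4 + 9 * ω ^ 2 + 16 := by
  rw [Complex.sq_norm, normSq_apply]; simp [pdCharPoly, pow_two]; ring

lemma sq_norm_one_add_I_mul_div_pdCharPoly_le :
    ‖(1 + I * ω) / pdCharPoly (I * ω)‖ ^ 2 ≤ 1 / 8 := by
  have hnum : ‖1 + I * ω‖ ^ 2 = 1 + ω ^ 2 := by
    rw [Complex.sq_norm, normSq_apply]; simp; ring
  rw [norm_div, div_pow, hnum, sq_norm_pdCharPoly_I_mul, div_le_iff₀ (by positivity)]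
  nlinarith [sq_nonneg (ω ^ 2)]

lemma sq_norm_I_mul_add_four_div_pdCharPoly :
    ‖(I * ω + 4) / pdCharPoly (I * ω)‖ ^ 2 * (4 * ω ^ 4 + 9 * ω ^ 2 + 16) = ω ^ 2 + 16 := by
  have hnum : ‖I * ω + 4‖ ^ 2 = ω ^ 2 + 16 := by
    rw [Complex.sq_norm, normSq_apply]; simp; ring
  rw [norm_div, div_pow, hnum, sq_norm_pdCharPoly_I_mul, div_mul_cancel₀ _ (by positivity)]

lemma norm_I_mul_add_four_div_pdCharPoly_le_one : ‖(I * ω + 4) / pdCharPoly (I * ω)‖ ≤ 1 := by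
  have h := sq_norm_I_mul_add_four_div_pdCharPoly ω
  refine (pow_le_one_iff_of_nonneg (norm_nonneg _) two_ne_zero).mp ?_
  nlinarith [sq_nonneg ω, sq_nonneg (ω ^ 2), sq_nonneg ‖(I * ω + 4) / pdCharPoly (I * ω)‖]

lemma norm_I_mul_sq_div_pdCharPoly_sq_le :
    ‖(I * ω) ^ 2 / pdCharPoly (I * ω) ^ 2‖
      ≤ 1 / 4 * (1 - ‖(I * ω + 4) / pdCharPoly (I * ω)‖) := by
  set g := 4 * ω ^ 4 + 9 * ω ^ 2 + 16
  set τ := ‖(I * ω + 4) / pdCharPoly (I * ω)‖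
  have hg : 0 < g := by positivity
  have hτ : τ ^ 2 * g = ω ^ 2 + 16 := sq_norm_I_mul_add_four_div_pdCharPoly ω
  have hP : ‖(I * ω) ^ 2 / pdCharPoly (I * ω) ^ 2‖ = ω ^ 2 / g := by
    rw [norm_div, norm_pow, norm_pow, sq_norm_pdCharPoly_I_mul]; simp [g]
  have hτg : τ * g ≤ g - 4 * ω ^ 2 := by
    refine (pow_le_pow_iff_left₀ (by positivity) (by nlinarith) two_ne_zero).mp ?_
    nlinarith [sq_nonneg ω, sq_nonneg (ω ^ 2)]
  rw [hP, div_le_iff₀ hg]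
  nlinarith

end ImaginaryAxis

/-- Theorem 1 of the paper ((L₂,ℓ₂) string stability with no disturbance on the
leader), frequency-domain form: there exist PD gains `a, b > 0`, time headway `h > 0`
and a constant `C > 0` such that for every chain length `N ≥ 1` and all disturbances
`d̂₁,…,d̂_N ∈ L²(ℝ,ℂ)`, the errors `ê₁ = −L d̂₁` and
`ê_i = −L d̂_i + Σ_{m=2}^{i} T^{i−m} P d̂_{m−1}` satisfy
`Σ_{i=1}^N ‖ê_i‖² ≤ C Σ_{m=1}^N ‖d̂_m‖²`. -/
theorem pd_headway_L2_ell2_string_stability_no_leader_disturbance :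
    ∃ a b h C : ℝ, 0 < a ∧ 0 < b ∧ 0 < h ∧ 0 < C ∧
      ∀ K D T L P : ℂ → ℂ,
        (∀ s : ℂ, K s = (b : ℂ) * s + (a : ℂ)) →
        (∀ s : ℂ, D s = s ^ 2 + (1 + (h : ℂ) * s) * K s) →
        (∀ s : ℂ, T s = K s / D s) →
        (∀ s : ℂ, L s = (1 + (h : ℂ) * s) / D s) →
        (∀ s : ℂ, P s = s ^ 2 / (D s) ^ 2) →
        ∀ N : ℕ, 1 ≤ N → ∀ d : ℕ → ℝ → ℂ,
          (∀ i : ℕ, 1 ≤ i → i ≤ N → MemLp (d i) 2 (volume : Measure ℝ)) →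
          ∑ i ∈ Finset.Icc 1 N,
              (eLpNorm (fun ω : ℝ =>
                  - L (Complex.I * (ω : ℂ)) * d i ω
                    + ∑ m ∈ Finset.Icc 2 i,
                        (T (Complex.I * (ω : ℂ))) ^ (i - m) * P (Complex.I * (ω : ℂ))
                          * d (m - 1) ω)
                2 (volume : Measure ℝ)) ^ 2
            ≤ ENNReal.ofReal C *
                ∑ m ∈ Finset.Icc 1 N, (eLpNorm (d m) 2 (volume : Measure ℝ)) ^ 2 := by
  refine ⟨4, 1, 1, 2 * (1 / 8 + (1 / 4) ^ 2), by norm_num, one_pos, one_pos, by norm_num, ?_⟩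
  intro K D T L P hK hD hT hL hP N _ d hd
  have hD' : ∀ s, D s = pdCharPoly s := fun s => by rw [hD, hK, pdCharPoly]; push_cast; ring
  refine sum_eLpNorm_two_sq_le_of_ae_le _ _ _ (by norm_num)
    (fun m hm => (hd m (mem_Icc.mp hm).1 (mem_Icc.mp hm).2).aestronglyMeasurable)
    (ae_of_all _ fun ω => ?_)
  have hTω : T (I * ω) = (I * ω + 4) / pdCharPoly (I * ω) := by rw [hT, hK, hD']; push_cast; ring
  have hLω : L (I * ω) = (1 + I * ω) / pdCharPoly (I * ω) := by rw [hL, hD']; push_cast; ring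
  have hPω : P (I * ω) = (I * ω) ^ 2 / pdCharPoly (I * ω) ^ 2 := by rw [hP, hD']
  rw [hTω, hLω, hPω]
  refine (sum_sq_norm_spacingError_le N (by norm_num) (norm_I_mul_add_four_div_pdCharPoly_le_one ω)
    (norm_I_mul_sq_div_pdCharPoly_sq_le ω) _ _).trans ?_
  gcongr
  exact sq_norm_one_add_I_mul_div_pdCharPoly_le ω
end

section
/- (Theorem 2 of the paper, frequency-domain form.) Let h ≥ 0 be a real number and let K : ℂ → ℂ be such that K(0) ≠ 0, the function ω ↦ K(jω) (from ℝ to ℂ) is continuous at ω = 0, and D(jω) := −ω² + (1 + j·h·ω)·K(jω) ≠ 0 for every real ω. Set T(s) = K(s)/D(s) and L₀(s) = 1/D(s). Then for every constant C > 0 there exist an integer N ≥ 1 and a function d̂₀ ∈ L²(ℝ, ℂ) with ‖d̂₀‖ ≤ 1 such that Σ_{i=1}^{N} ∫_ℝ |T(jω)|^{2(i−1)} · |L₀(jω)|² · |d̂₀(ω)|² dω > C. Here j denotes the imaginary unit and ‖f‖ = (∫_ℝ |f(ω)|² dω)^{1/2} is the L² norm. -/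
/-!
Since `K(0) ≠ 0`, the transfer function satisfies `T(0) = 1` and `L₀(0) ≠ 0`. Given `N`, continuity
gives a frequency band `(-δ, δ)` on which `|T|^{2(N-1)} ≥ 1/2` (hence `|T|^{2(i-1)} ≥ 1/2` for all
`i ≤ N`) and `|L₀|² ≥ |L₀(0)|²/2`. A disturbance of unit `L²` norm concentrated on that band makes each
of the `N` summands at least `|L₀(0)|²/4`, so the sum exceeds any `C` once `N` is large.
-/

open MeasureTheory Metric Filter Topology

lemma min_one_pow_le_pow {R : Type*} [Semiring R] [LinearOrder R] [IsStrictOrderedRing R]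
    {x : R} (hx : 0 ≤ x) {i n : ℕ} (hin : i ≤ n) : min 1 (x ^ n) ≤ x ^ i := by
  rcases le_or_gt 1 x with h | h
  · exact min_le_of_left_le (one_le_pow₀ h)
  · exact min_le_of_right_le (pow_le_pow_of_le_one hx h.le hin)

section NormalizedIndicator

variable {α : Type*} [MeasurableSpace α] {μ : Measure α} {S : Set α}

noncomputable def normalizedIndicator (μ : Measure α) (S : Set α) : α → ℂ :=
  S.indicator fun _ => ((Real.sqrt (μ S).toReal)⁻¹ : ℝ)

lemma norm_normalizedIndicator_sq_of_mem {x : α} (hx : x ∈ S) :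
    ‖normalizedIndicator μ S x‖ ^ 2 = ((μ S).toReal)⁻¹ := by
  rw [normalizedIndicator, Set.indicator_of_mem hx, Complex.norm_real, Real.norm_eq_abs, sq_abs,
    inv_pow, Real.sq_sqrt ENNReal.toReal_nonneg]

lemma memLp_normalizedIndicator (p : ENNReal) (hS : MeasurableSet S) (hμ : μ S ≠ ⊤) :
    MemLp (normalizedIndicator μ S) p μ :=
  memLp_indicator_const p hS _ (Or.inr hμ)

lemma eLpNorm_normalizedIndicator (hS : MeasurableSet S) (h0 : μ S ≠ 0) (hμ : μ S ≠ ⊤) :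
    eLpNorm (normalizedIndicator μ S) 2 μ = 1 := by
  rw [normalizedIndicator, eLpNorm_indicator_const hS two_ne_zero ENNReal.ofNat_ne_top]
  generalize μ S = M at h0 hμ ⊢
  lift M to NNReal using hμ
  rw [← ofReal_norm, Complex.norm_real, Real.norm_of_nonneg (by positivity),
    ENNReal.coe_toReal, ← ENNReal.ofReal_coe_nnreal,
    ENNReal.ofReal_rpow_of_nonneg (by positivity) (by norm_num),
    ← ENNReal.ofReal_mul (by positivity), ENNReal.toReal_ofNat, ← Real.sqrt_eq_rpow,
    inv_mul_cancel₀ (by simpa using h0), ENNReal.ofReal_one]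

lemma ofReal_le_lintegral_mul_norm_sq_normalizedIndicator (hS : MeasurableSet S) (h0 : μ S ≠ 0)
    (hμ : μ S ≠ ⊤) {f : α → ℝ} {c : ℝ} (hf : ∀ x ∈ S, c ≤ f x) :
    ENNReal.ofReal c ≤ ∫⁻ x, ENNReal.ofReal (f x * ‖normalizedIndicator μ S x‖ ^ 2) ∂μ := by
  have hm : 0 < (μ S).toReal := ENNReal.toReal_pos h0 hμ
  calc ENNReal.ofReal c
      = ENNReal.ofReal (c * ((μ S).toReal)⁻¹) * ENNReal.ofReal (μ S).toReal := by
        rw [← ENNReal.ofReal_mul' hm.le, inv_mul_cancel_right₀ hm.ne']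
    _ = ∫⁻ _ in S, ENNReal.ofReal (c * ((μ S).toReal)⁻¹) ∂μ := by
        rw [setLIntegral_const, ENNReal.ofReal_toReal hμ]
    _ ≤ ∫⁻ x in S, ENNReal.ofReal (f x * ‖normalizedIndicator μ S x‖ ^ 2) ∂μ :=
        setLIntegral_mono' hS fun x hx => by
          rw [norm_normalizedIndicator_sq_of_mem hx]
          gcongr
          exact hf x hx
    _ ≤ _ := setLIntegral_le_lintegral _ _

end NormalizedIndicator
lemma exists_sum_lintegral_norm_pow_mul_gt {T L : ℝ → ℂ} {a : ℝ} (hT : ContinuousAt T a)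
    (hL : ContinuousAt L a) (hTa : 1 ≤ ‖T a‖) (hLa : L a ≠ 0) (C : ℝ) :
    ∃ N : ℕ, 1 ≤ N ∧ ∃ d : ℝ → ℂ, MemLp d 2 volume ∧ eLpNorm d 2 volume ≤ 1 ∧
      ENNReal.ofReal C < ∑ i ∈ Finset.Icc 1 N, ∫⁻ ω,
        ENNReal.ofReal (‖T ω‖ ^ (2 * (i - 1)) * ‖L ω‖ ^ 2 * ‖d ω‖ ^ 2) := by
  set c := ‖L a‖ ^ 2 / 4
  have hc : 0 < c := by positivity
  obtain ⟨N, hN⟩ := exists_nat_gt (C / c)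
  have hNC : C < (N + 1 : ℕ) * c := by
    rw [div_lt_iff₀ hc] at hN
    push_cast
    linarith
  have hnear : ∀ᶠ ω in 𝓝 a, 1 / 2 < ‖T ω‖ ^ (2 * N) ∧ ‖L a‖ ^ 2 / 2 < ‖L ω‖ ^ 2 :=
    ((hT.norm.pow _).eventually_const_lt ((one_le_pow₀ hTa).trans_lt' (by norm_num))).and
      ((hL.norm.pow 2).eventually_const_lt (half_lt_self (by positivity)))
  obtain ⟨δ, hδ, hball⟩ := eventually_nhds_iff_ball.mp hnear
  have hbound : ∀ i ∈ Finset.Icc 1 (N + 1), ∀ ω ∈ ball a δ,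
      c ≤ ‖T ω‖ ^ (2 * (i - 1)) * ‖L ω‖ ^ 2 := by
    intro i hi ω hω
    obtain ⟨hTω, hLω⟩ := hball ω hω
    have hpow : 1 / 2 ≤ ‖T ω‖ ^ (2 * (i - 1)) :=
      (lt_min (by norm_num) hTω).le.trans
        (min_one_pow_le_pow (norm_nonneg _) (by grind))
    calc c = 1 / 2 * (‖L a‖ ^ 2 / 2) := by ring
      _ ≤ _ := by gcongr
  have hvol0 : volume (ball a δ) ≠ 0 := (measure_ball_pos volume a hδ).ne'
  have hvol : volume (ball a δ) ≠ ⊤ := measure_ball_lt_top.ne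
  refine ⟨N + 1, by omega, normalizedIndicator volume (ball a δ),
    memLp_normalizedIndicator 2 measurableSet_ball hvol,
    (eLpNorm_normalizedIndicator measurableSet_ball hvol0 hvol).le, ?_⟩
  calc ENNReal.ofReal C < ENNReal.ofReal ((N + 1 : ℕ) * c) :=
        (ENNReal.ofReal_lt_ofReal_iff (by positivity)).mpr hNC
    _ = (Finset.Icc 1 (N + 1)).card • ENNReal.ofReal c := by
        rw [ENNReal.ofReal_mul (by positivity), ENNReal.ofReal_natCast, Nat.card_Icc, nsmul_eq_mul]
        simp
    _ ≤ _ := Finset.card_nsmul_le_sum _ _ _ fun i hi =>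
        ofReal_le_lintegral_mul_norm_sq_normalizedIndicator measurableSet_ball hvol0 hvol
          (hbound i hi)

theorem bounded_controller_headway_L2_ell2_string_instability_general
    (h : ℝ) (K : ℂ → ℂ) (hK0 : K 0 ≠ 0)
    (hKcont : ContinuousAt (fun ω : ℝ => K (Complex.I * (ω : ℂ))) 0)
    (hD : ∀ ω : ℝ, -(ω : ℂ) ^ 2 + (1 + Complex.I * (h : ℂ) * (ω : ℂ)) * K (Complex.I * (ω : ℂ)) ≠ 0) :
    ∀ C : ℝ, 0 < C → ∃ N : ℕ, 1 ≤ N ∧ ∃ d₀ : ℝ → ℂ,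
      MemLp d₀ 2 (volume : Measure ℝ) ∧
      eLpNorm d₀ 2 (volume : Measure ℝ) ≤ 1 ∧
      ENNReal.ofReal C <
        ∑ i ∈ Finset.Icc 1 N, ∫⁻ ω : ℝ,
          ENNReal.ofReal
            ((‖K (Complex.I * (ω : ℂ)) /
                (-(ω : ℂ) ^ 2 + (1 + Complex.I * (h : ℂ) * (ω : ℂ)) * K (Complex.I * (ω : ℂ)))‖) ^ (2 * (i - 1))
              * (‖1 /
                  (-(ω : ℂ) ^ 2 + (1 + Complex.I * (h : ℂ) * (ω : ℂ)) * K (Complex.I * (ω : ℂ)))‖) ^ 2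
              * (‖d₀ ω‖) ^ 2) := by
  intro C _
  have hDcont : ContinuousAt
      (fun ω : ℝ => -(ω : ℂ) ^ 2 + (1 + Complex.I * (h : ℂ) * (ω : ℂ)) * K (Complex.I * (ω : ℂ))) 0 :=
    (by fun_prop : ContinuousAt (fun ω : ℝ => -(ω : ℂ) ^ 2) 0).add
      ((by fun_prop : ContinuousAt (fun ω : ℝ => 1 + Complex.I * (h : ℂ) * (ω : ℂ)) 0).mul hKcont)
  refine exists_sum_lintegral_norm_pow_mul_gt (hKcont.div hDcont (hD 0))
    (continuousAt_const.div hDcont (hD 0)) ?_ (one_div_ne_zero (hD 0)) C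
  simp [hK0]

/-- Theorem 2 of the paper (impossibility of (L₂,ℓ₂) string stability with bounded
controllers), frequency-domain form: for any time headway `h ≥ 0` and any controller
`K` with finite nonzero DC gain (continuity of `ω ↦ K(jω)` at `0` and `K(0) ≠ 0`)
whose closed-loop denominator `D(jω) = −ω² + (1 + j h ω) K(jω)` never vanishes,
the quantity `Σ_{i=1}^N ∫ |T(jω)|^{2(i−1)} |L₀(jω)|² |d̂₀(ω)|² dω` (with `T = K/D`,
`L₀ = 1/D`) cannot be bounded uniformly over `N` and over `‖d̂₀‖ ≤ 1`. -/
theorem bounded_controller_headway_L2_ell2_string_instability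
    (h : ℝ) (hh : 0 ≤ h) (K : ℂ → ℂ) (hK0 : K 0 ≠ 0)
    (hKcont : ContinuousAt (fun ω : ℝ => K (Complex.I * (ω : ℂ))) 0)
    (hD : ∀ ω : ℝ, -(ω : ℂ) ^ 2 + (1 + Complex.I * (h : ℂ) * (ω : ℂ)) * K (Complex.I * (ω : ℂ)) ≠ 0) :
    ∀ C : ℝ, 0 < C → ∃ N : ℕ, 1 ≤ N ∧ ∃ d₀ : ℝ → ℂ,
      MemLp d₀ 2 (volume : Measure ℝ) ∧
      eLpNorm d₀ 2 (volume : Measure ℝ) ≤ 1 ∧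
      ENNReal.ofReal C <
        ∑ i ∈ Finset.Icc 1 N, ∫⁻ ω : ℝ,
          ENNReal.ofReal
            ((‖K (Complex.I * (ω : ℂ)) /
                (-(ω : ℂ) ^ 2 + (1 + Complex.I * (h : ℂ) * (ω : ℂ)) * K (Complex.I * (ω : ℂ)))‖) ^ (2 * (i - 1))
              * (‖1 /
                  (-(ω : ℂ) ^ 2 + (1 + Complex.I * (h : ℂ) * (ω : ℂ)) * K (Complex.I * (ω : ℂ)))‖) ^ 2
              * (‖d₀ ω‖) ^ 2) :=
  bounded_controller_headway_L2_ell2_string_instability_general h K hK0 hKcont hD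
end
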